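/- Let ρ ∈ H^1(T^2) satisfy ρ ≥ 0 with ∫_{T^2} ρ dx = M₀ and the pointwise bound |ρ − M₀| ≤ M₀ − δ for constants 0 < δ < M₀. Then with f(ρ) = (1/(2n))(ρ−M₀)^{2n}, it holds that ∫_{T^2} f(ρ) dx ≤ (C/n) ∫_{T^2} |∇(ρ − M₀)^n|² dx for a universal constant C. -/

import Mathlib

open MeasureTheory Real Set

noncomputable section

/-- Fundamental domain of the torus `T² = ℝ²/ℤ²` (unit measure). -/
def Qd : Set (ℝ × ℝ) := Set.Ioc 0 1 ×ˢ Set.Ioc 0 1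

/-- `ℤ²`-periodicity: functions on the torus. -/
def Per {α : Type*} (f : ℝ × ℝ → α) : Prop :=
  ∀ x : ℝ × ℝ, f (x.1 + 1, x.2) = f x ∧ f (x.1, x.2 + 1) = f x

/-- First partial derivative. -/
def d1 (f : ℝ × ℝ → ℝ) (x : ℝ × ℝ) : ℝ := fderiv ℝ f x (1, 0)

/-- Second partial derivative. -/
def d2 (f : ℝ × ℝ → ℝ) (x : ℝ × ℝ) : ℝ := fderiv ℝ f x (0, 1)

/-- Laplacian. -/
def lap (f : ℝ × ℝ → ℝ) (x : ℝ × ℝ) : ℝ := d1 (d1 f) x + d2 (d2 f) x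

/-- Squared length of the gradient. -/
def gradSq (f : ℝ × ℝ → ℝ) (x : ℝ × ℝ) : ℝ := (d1 f x) ^ 2 + (d2 f x) ^ 2

abbrev μ1 : Measure ℝ := volume.restrict (Set.Ioc 0 1)

lemma restrict_Qd : (volume : Measure (ℝ×ℝ)).restrict Qd = μ1.prod μ1 := by
  rw [Measure.volume_eq_prod]; unfold Qd; rw [← Measure.prod_restrict]

instance : IsProbabilityMeasure μ1 := by
  constructor; simp [Real.volume_Ioc]

lemma integrableOn_Qd {F : ℝ×ℝ → ℝ} (hF : Continuous F) : IntegrableOn F Qd := by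
  have h1 : Qd ⊆ Icc (0,0) (1,1) := by
    rw [Icc_prod_eq]
    exact Set.prod_mono Set.Ioc_subset_Icc_self Set.Ioc_subset_Icc_self
  exact (hF.continuousOn.integrableOn_compact isCompact_Icc).mono_set h1

lemma integrable_cont {F : ℝ×ℝ → ℝ} (hF : Continuous F) : Integrable F (μ1.prod μ1) := by
  rw [← restrict_Qd]; exact integrableOn_Qd hF

/-- Cauchy–Schwarz: `(∫ g)² ≤ ν(univ) ∫ g²` for a finite measure. -/
lemma sq_integral_le {α : Type*} [MeasurableSpace α] (ν : Measure α) [IsFiniteMeasure ν]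
    {g : α → ℝ} (hg : Integrable g ν) (hg2 : Integrable (fun x => (g x)^2) ν) :
    (∫ x, g x ∂ν)^2 ≤ (ν Set.univ).toReal * ∫ x, (g x)^2 ∂ν := by
  set c := (ν Set.univ).toReal with hc
  have hc0 : 0 ≤ c := ENNReal.toReal_nonneg
  rcases eq_or_lt_of_le hc0 with h0 | hpos
  · have h1 : ν Set.univ = 0 := by
      rcases (ENNReal.toReal_eq_zero_iff _).mp h0.symm with h | h
      · exact h
      · exact absurd h (measure_ne_top ν _)
    have hν : ν = 0 := by
      ext s hs
      exact le_antisymm (le_trans (measure_mono (Set.subset_univ s)) h1.le) zero_le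
    simp [hν]
  · set a := (∫ x, g x ∂ν) / c with ha
    have key : 0 ≤ ∫ x, (g x - a)^2 ∂ν := integral_nonneg (fun x => sq_nonneg _)
    have h1 : Integrable (fun x => (g x)^2 - 2*a*(g x)) ν := hg2.sub (hg.const_mul (2*a))
    have expand : ∫ x, (g x - a)^2 ∂ν
        = ∫ x, (g x)^2 ∂ν - 2*a*(∫ x, g x ∂ν) + a^2 * c := by
      have e1 : ∀ x, (g x - a)^2 = ((g x)^2 - 2*a*(g x)) + a^2 := by intro x; ring
      rw [integral_congr_ae (Filter.Eventually.of_forall e1),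
          integral_add h1 (integrable_const _),
          integral_sub hg2 (hg.const_mul (2*a)), integral_const_mul _ _, integral_const]
      simp only [smul_eq_mul, measureReal_def, ← hc]
      ring
    rw [expand] at key
    have hca : a * c = ∫ x, g x ∂ν := by rw [ha]; exact div_mul_cancel₀ _ hpos.ne'
    nlinarith [key, sq_nonneg a]

/-- pointwise: `a |aᵐ − bᵐ| ≤ |aᵐ⁺¹ − bᵐ⁺¹|` for `a b ≥ 0`. -/
lemma mul_abs_pow_le (m : ℕ) {a b : ℝ} (ha : 0 ≤ a) (hb : 0 ≤ b) :
    a * |a^m - b^m| ≤ |a^(m+1) - b^(m+1)| := by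
  rcases le_total a b with h | h
  · rw [abs_of_nonpos (by nlinarith [pow_le_pow_left₀ ha h m] : a^m - b^m ≤ 0),
        abs_of_nonpos (by nlinarith [pow_le_pow_left₀ ha h (m+1)] : a^(m+1) - b^(m+1) ≤ 0)]
    have hbm : a * b^m ≤ b^(m+1) := by
      rw [pow_succ, mul_comm (b^m) b]
      exact mul_le_mul_of_nonneg_right h (pow_nonneg hb m)
    nlinarith [pow_succ a m, hbm]
  · rw [abs_of_nonneg (by nlinarith [pow_le_pow_left₀ hb h m] : 0 ≤ a^m - b^m),
        abs_of_nonneg (by nlinarith [pow_le_pow_left₀ hb h (m+1)] : 0 ≤ a^(m+1) - b^(m+1))]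
    have hbm : b^(m+1) ≤ a * b^m := by
      rw [pow_succ, mul_comm (b^m) b]
      exact mul_le_mul_of_nonneg_right h (pow_nonneg hb m)
    nlinarith [pow_succ a m, hbm]

/-- derivative of `s ↦ s·|s|^m`. -/
lemma hasDerivAt_mul_abs_pow (m : ℕ) (t : ℝ) :
    HasDerivAt (fun s : ℝ => s * |s|^m) ((m+1 : ℝ) * |t|^m) t := by
  rcases lt_trichotomy t 0 with ht | rfl | ht
  · have hev : (fun s : ℝ => (-1:ℝ)^m * s^(m+1)) =ᶠ[nhds t] (fun s : ℝ => s * |s|^m) := by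
      filter_upwards [eventually_lt_nhds ht] with s hs
      rw [abs_of_neg hs]
      ring_nf
    have h := ((hasDerivAt_pow (m+1) t).const_mul ((-1:ℝ)^m)).congr_of_eventuallyEq hev.symm
    refine h.congr_deriv ?_
    rw [abs_of_neg ht, neg_pow]
    push_cast
    ring_nf
  · rcases Nat.eq_zero_or_pos m with rfl | hm
    · simpa using (hasDerivAt_id' (0:ℝ))
    · simp only [abs_zero, zero_pow hm.ne', mul_zero]
      rw [hasDerivAt_iff_tendsto_slope]
      have hsl : ∀ s : ℝ, slope (fun s : ℝ => s * |s|^m) 0 s = |s|^m := by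
        intro s
        rcases eq_or_ne s 0 with rfl | hs
        · simp [slope, hm.ne']
        · simp [slope_def_field, hs]
      rw [Filter.tendsto_congr hsl]
      have hc : Filter.Tendsto (fun s : ℝ => |s|^m) (nhds 0) (nhds 0) := by
        have := ((continuous_abs.pow m).tendsto (0:ℝ))
        simpa [hm.ne', Pi.pow_def] using this
      exact hc.mono_left nhdsWithin_le_nhds
  · have hev : (fun s : ℝ => s^(m+1)) =ᶠ[nhds t] (fun s : ℝ => s * |s|^m) := by
      filter_upwards [eventually_gt_nhds ht] with s hs
      rw [abs_of_pos hs, pow_succ]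
      ring
    have h := (hasDerivAt_pow (m+1) t).congr_of_eventuallyEq hev.symm
    refine h.congr_deriv ?_
    rw [abs_of_pos ht]
    push_cast
    ring

open Interval in
lemma sq_intervalIntegral_le {g : ℝ → ℝ} (hg : Continuous g) {a b : ℝ}
    (ha : a ∈ Ioc (0:ℝ) 1) (hb : b ∈ Ioc (0:ℝ) 1) :
    (∫ t in a..b, g t)^2 ≤ ∫ t in Ioc (0:ℝ) 1, (g t)^2 := by
  have hsub : Ι a b ⊆ Ioc (0:ℝ) 1 := by
    rw [Set.uIoc]
    exact Ioc_subset_Ioc (le_min ha.1.le hb.1.le) (max_le ha.2 hb.2)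
  have hsq : (∫ t in a..b, g t)^2 = (∫ t in Ι a b, g t)^2 := by
    rw [intervalIntegral.intervalIntegral_eq_integral_uIoc]
    split_ifs <;> simp [neg_sq]
  have hfin : volume (Ι a b) ≤ 1 := by
    calc volume (Ι a b) ≤ volume (Ioc (0:ℝ) 1) := measure_mono hsub
    _ = 1 := by simp [Real.volume_Ioc]
  haveI : IsFiniteMeasure (volume.restrict (Ι a b)) := by
    constructor
    rw [Measure.restrict_apply_univ]
    exact lt_of_le_of_lt hfin (by norm_num)
  have hcs := sq_integral_le (volume.restrict (Ι a b))
      (hg.integrableOn_uIoc) ((hg.pow 2).integrableOn_uIoc)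
  rw [Measure.restrict_apply_univ] at hcs
  have h1 : ∫ t in Ι a b, (g t)^2 ≤ ∫ t in Ioc (0:ℝ) 1, (g t)^2 := by
    apply setIntegral_mono_set ((hg.pow 2).integrableOn_Ioc)
    · exact Filter.Eventually.of_forall (fun t => sq_nonneg _)
    · exact Filter.Eventually.of_forall hsub
  have h2 : (volume (Ι a b)).toReal ≤ 1 := by
    have := ENNReal.toReal_mono (by norm_num : (1:ENNReal) ≠ ⊤) hfin
    simpa using this
  have h3 : 0 ≤ ∫ t in Ι a b, (g t)^2 :=
    setIntegral_nonneg measurableSet_uIoc (fun t _ => sq_nonneg _)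
  rw [hsq]
  calc (∫ t in Ι a b, g t)^2 ≤ (volume (Ι a b)).toReal * ∫ t in Ι a b, (g t)^2 := hcs
  _ ≤ 1 * ∫ t in Ι a b, (g t)^2 := mul_le_mul_of_nonneg_right h2 h3
  _ ≤ ∫ t in Ioc (0:ℝ) 1, (g t)^2 := by rw [one_mul]; exact h1

/-- FTC slice in the first variable. -/
lemma slice_d1 {f : ℝ×ℝ → ℝ} {f' : ℝ×ℝ → (ℝ×ℝ) →L[ℝ] ℝ}
    (hf : ∀ z, HasFDerivAt f (f' z) z) {g : ℝ×ℝ → ℝ}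
    (heq : ∀ z, f' z (1,0) = g z) (hg : Continuous g) (a b x2 : ℝ) :
    ∫ t in a..b, g (t, x2) = f (b, x2) - f (a, x2) := by
  apply intervalIntegral.integral_eq_sub_of_hasDerivAt
  · intro t ht
    have hL : HasDerivAt (fun t : ℝ => ((t, x2) : ℝ×ℝ)) ((1:ℝ), (0:ℝ)) t :=
      (hasDerivAt_id t).prodMk (hasDerivAt_const t x2)
    have := (hf (t, x2)).comp_hasDerivAt t hL
    rw [heq (t, x2)] at this
    exact this
  · exact (hg.comp (continuous_id.prodMk continuous_const)).intervalIntegrable a b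

/-- FTC slice in the second variable. -/
lemma slice_d2 {f : ℝ×ℝ → ℝ} {f' : ℝ×ℝ → (ℝ×ℝ) →L[ℝ] ℝ}
    (hf : ∀ z, HasFDerivAt f (f' z) z) {g : ℝ×ℝ → ℝ}
    (heq : ∀ z, f' z (0,1) = g z) (hg : Continuous g) (a b x1 : ℝ) :
    ∫ t in a..b, g (x1, t) = f (x1, b) - f (x1, a) := by
  apply intervalIntegral.integral_eq_sub_of_hasDerivAt
  · intro t ht
    have hL : HasDerivAt (fun t : ℝ => ((x1, t) : ℝ×ℝ)) ((0:ℝ), (1:ℝ)) t :=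
      (hasDerivAt_const t x1).prodMk (hasDerivAt_id t)
    have := (hf (x1, t)).comp_hasDerivAt t hL
    rw [heq (x1, t)] at this
    exact this
  · exact (hg.comp (continuous_const.prodMk continuous_id)).intervalIntegrable a b

/-- Internal-energy control by the pressure gradient: for `ρ ≥ 0` on `T²` with mass `M₀`,
`|ρ − M₀| ≤ M₀ − δ` and `f(ρ) = (1/2n)(ρ−M₀)^{2n}`,
`∫ f(ρ) ≤ (C/n) ∫ |∇(ρ − M₀)ⁿ|²` for a universal constant `C` (independent of `n, δ, M₀`). -/
theorem internal_energy_poincare :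
    ∃ C : ℝ, 0 < C ∧ ∀ (n : ℕ), 1 ≤ n → ∀ M₀ δ : ℝ, 0 < δ → δ < M₀ →
      ∀ ρ : ℝ × ℝ → ℝ, ContDiff ℝ 1 ρ → Per ρ → (∀ x, 0 ≤ ρ x) →
        (∫ x in Qd, ρ x) = M₀ → (∀ x, |ρ x - M₀| ≤ M₀ - δ) →
        (∫ x in Qd, (1 / (2 * (n : ℝ))) * (ρ x - M₀) ^ (2 * n))
          ≤ (C / (n : ℝ)) * ∫ x in Qd, gradSq (fun z => (ρ z - M₀) ^ n) x := by
  refine ⟨4, by norm_num, ?_⟩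
  intro n hn M₀ δ hδ hδM ρ hρ hPer hρ0 hmass hbound
  obtain ⟨m, rfl⟩ : ∃ m, n = m + 1 := ⟨n - 1, (Nat.succ_pred_eq_of_pos hn).symm⟩
  set ν := (volume : Measure (ℝ×ℝ)).restrict Qd with hν
  haveI hprob : IsProbabilityMeasure ν := by rw [hν, restrict_Qd]; infer_instance
  have hQdmeas : MeasurableSet Qd := (measurableSet_Ioc).prod (measurableSet_Ioc)
  -- functions
  set u : ℝ×ℝ → ℝ := fun z => ρ z - M₀ with hu
  have hucont : Continuous u := (hρ.continuous).sub continuous_const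
  have hudiff : Differentiable ℝ ρ := hρ.differentiable one_ne_zero
  have Hu : ∀ z, HasFDerivAt u (fderiv ℝ ρ z) z := fun z =>
    (hudiff z).hasFDerivAt.sub_const M₀
  set h : ℝ×ℝ → ℝ := fun z => u z * |u z| ^ m with hh
  have hhcont : Continuous h := hucont.mul ((hucont.abs).pow m)
  set w : ℝ×ℝ → ℝ := fun z => (ρ z - M₀) ^ (m+1) with hw
  have Hh : ∀ z, HasFDerivAt h ((((m:ℝ)+1) * |u z| ^ m) • fderiv ℝ ρ z) z := fun z =>
    (hasDerivAt_mul_abs_pow m (u z)).comp_hasFDerivAt z (Hu z)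
  have Hw : ∀ z, HasFDerivAt w ((((m:ℝ)+1) * (u z) ^ m) • fderiv ℝ ρ z) z := by
    intro z
    have := (hasDerivAt_pow (m+1) (u z)).comp_hasFDerivAt z (Hu z)
    simp at this; exact this
  set du : ℝ×ℝ → ℝ := fun z => fderiv ℝ ρ z (1,0) with hdu
  set dv : ℝ×ℝ → ℝ := fun z => fderiv ℝ ρ z (0,1) with hdv
  have hducont : Continuous du := (hρ.continuous_fderiv one_ne_zero).clm_apply continuous_const
  have hdvcont : Continuous dv := (hρ.continuous_fderiv one_ne_zero).clm_apply continuous_const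
  set g1 : ℝ×ℝ → ℝ := fun z => (((m:ℝ)+1) * |u z| ^ m) * du z with hg1
  set g2 : ℝ×ℝ → ℝ := fun z => (((m:ℝ)+1) * |u z| ^ m) * dv z with hg2
  have hg1cont : Continuous g1 := (continuous_const.mul ((hucont.abs).pow m)).mul hducont
  have hg2cont : Continuous g2 := (continuous_const.mul ((hucont.abs).pow m)).mul hdvcont
  have heq1 : ∀ z, ((((m:ℝ)+1) * |u z| ^ m) • fderiv ℝ ρ z) (1,0) = g1 z := by
    intro z; simp [hg1, hdu]
  have heq2 : ∀ z, ((((m:ℝ)+1) * |u z| ^ m) • fderiv ℝ ρ z) (0,1) = g2 z := by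
    intro z; simp [hg2, hdv]
  -- gradSq w = g1² + g2²
  have habs2 : ∀ t : ℝ, (|t| ^ m)^2 = (t ^ m)^2 := by
    intro t; rw [← abs_pow, sq_abs]
  have hgrad : ∀ z, gradSq w z = (g1 z)^2 + (g2 z)^2 := by
    intro z
    have hfw : fderiv ℝ w z = (((m:ℝ)+1) * (u z) ^ m) • fderiv ℝ ρ z := (Hw z).fderiv
    have e1 : d1 w z = (((m:ℝ)+1) * (u z) ^ m) * du z := by
      rw [d1, hfw]; simp [hdu]
    have e2 : d2 w z = (((m:ℝ)+1) * (u z) ^ m) * dv z := by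
      rw [d2, hfw]; simp [hdv]
    rw [gradSq, e1, e2, hg1, hg2]
    simp only [mul_pow]
    rw [habs2]
  -- integrability
  have intQ : ∀ {F : ℝ×ℝ → ℝ}, Continuous F → Integrable F ν := fun hF => integrableOn_Qd hF
  have ih : Integrable h ν := intQ hhcont
  have ih2 : Integrable (fun x => (h x)^2) ν := intQ (hhcont.pow 2)
  have iu : Integrable u ν := intQ hucont
  have hU0 : ∫ x, u x ∂ν = 0 := by
    have e : ∫ x, u x ∂ν = (∫ x, ρ x ∂ν) - ∫ x, (fun _ => M₀) x ∂ν :=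
      integral_sub (intQ hρ.continuous) (integrable_const _)
    rw [e, integral_const]
    simp only [measureReal_def, measure_univ, ENNReal.toReal_one, one_smul]
    rw [hmass]
    ring
  -- definitions for Fubini
  set F1 : ℝ×ℝ → ℝ := fun z => (g1 z)^2 with hF1d
  set F2 : ℝ×ℝ → ℝ := fun z => (g2 z)^2 with hF2d
  have hF1 : Integrable F1 (μ1.prod μ1) := integrable_cont (hg1cont.pow 2)
  have hF2 : Integrable F2 (μ1.prod μ1) := integrable_cont (hg2cont.pow 2)
  set P : ℝ → ℝ := fun b => ∫ a, F1 (a, b) ∂μ1 with hPd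
  set R : ℝ → ℝ := fun a => ∫ t, F2 (a, t) ∂μ1 with hRd
  have hPint : Integrable P μ1 := hF1.integral_prod_right
  have hRint : Integrable R μ1 := hF2.integral_prod_left
  have hPsnd : Integrable (fun z : ℝ×ℝ => P z.2) ν := by
    rw [hν, restrict_Qd]
    have := ((integrable_const (1:ℝ) : Integrable (fun _ : ℝ => (1:ℝ)) μ1)).mul_prod hPint
    simpa using this
  have hRfst : Integrable (fun z : ℝ×ℝ => R z.1) ν := by
    rw [hν, restrict_Qd]
    have := hRint.mul_prod ((integrable_const (1:ℝ) : Integrable (fun _ : ℝ => (1:ℝ)) μ1))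
    simpa using this
  -- Fubini values
  have hMp : ∫ z, P z.2 ∂ν = ∫ z, F1 z ∂ν := by
    rw [hν, restrict_Qd]
    have e1 : ∫ z, P z.2 ∂(μ1.prod μ1) = ∫ b, P b ∂μ1 := by
      rw [integral_fun_snd]
      simp
    have e2 : ∫ z, F1 z ∂(μ1.prod μ1) = ∫ a, ∫ b, F1 (a, b) ∂μ1 ∂μ1 :=
      integral_prod F1 hF1
    have e3 : ∫ a, ∫ b, F1 (a, b) ∂μ1 ∂μ1 = ∫ b, ∫ a, F1 (a, b) ∂μ1 ∂μ1 :=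
      integral_integral_swap hF1
    rw [e1, e2, e3]
  have hMr : ∫ z, R z.1 ∂ν = ∫ z, F2 z ∂ν := by
    rw [hν, restrict_Qd]
    have e1 : ∫ z, R z.1 ∂(μ1.prod μ1) = ∫ a, R a ∂μ1 := by
      rw [integral_fun_fst]
      simp
    have e2 : ∫ z, F2 z ∂(μ1.prod μ1) = ∫ a, ∫ b, F2 (a, b) ∂μ1 ∂μ1 :=
      integral_prod F2 hF2
    rw [e1, e2]
  -- key slice bound
  have key : ∀ x ∈ Qd, ∀ y ∈ Qd, (h x - h y)^2 ≤ 2 * P x.2 + 2 * R y.1 := by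
    intro x hx y hy
    have hx1 : x.1 ∈ Ioc (0:ℝ) 1 := hx.1
    have hx2 : x.2 ∈ Ioc (0:ℝ) 1 := hx.2
    have hy1 : y.1 ∈ Ioc (0:ℝ) 1 := hy.1
    have hy2 : y.2 ∈ Ioc (0:ℝ) 1 := hy.2
    set A := ∫ t in y.1..x.1, g1 (t, x.2) with hA
    set B := ∫ t in y.2..x.2, g2 (y.1, t) with hB
    have e1 : A = h (x.1, x.2) - h (y.1, x.2) := slice_d1 Hh heq1 hg1cont y.1 x.1 x.2
    have e2 : B = h (y.1, x.2) - h (y.1, y.2) := slice_d2 Hh heq2 hg2cont y.2 x.2 y.1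
    have hxy : h x - h y = A + B := by
      rw [e1, e2]
      simp
    have hA2 : A^2 ≤ P x.2 := by
      have := sq_intervalIntegral_le (g := fun t => g1 (t, x.2))
        (hg1cont.comp (continuous_id.prodMk continuous_const)) hy1 hx1
      exact this
    have hB2 : B^2 ≤ R y.1 := by
      have := sq_intervalIntegral_le (g := fun t => g2 (y.1, t))
        (hg2cont.comp (continuous_const.prodMk continuous_id)) hy2 hx2
      exact this
    rw [hxy]
    nlinarith [sq_nonneg (A - B), hA2, hB2]
  -- notation for integrals
  set A1 := ∫ x, h x ∂ν with hA1d
  set A2 := ∫ x, (h x)^2 ∂ν with hA2d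
  -- expansion of ∫ (h x - h y)²
  have hcy : ∀ y : ℝ×ℝ, ∫ x, (h x - h y)^2 ∂ν = A2 - 2 * h y * A1 + (h y)^2 := by
    intro y
    have e : ∀ x, (h x - h y)^2 = ((h x)^2 - (2 * h y) * h x) + (h y)^2 := fun x => by ring
    have i1 : Integrable (fun x => (h x)^2 - (2 * h y) * h x) ν := ih2.sub (ih.const_mul _)
    rw [integral_congr_ae (Filter.Eventually.of_forall e),
        integral_add i1 (integrable_const _),
        integral_sub ih2 (ih.const_mul _), integral_const_mul _ _, integral_const]
    simp [measure_univ]; rfl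
  -- pointwise covariance bound : A1² ≤ ∫ (h x - h y)²
  have habsh : ∀ z, |h z| = |u z|^(m+1) := by
    intro z
    rw [hh]
    simp only []
    rw [abs_mul, abs_pow, abs_abs, pow_succ]
    ring
  have hA1sq : ∀ y : ℝ×ℝ, A1^2 ≤ ∫ x, (h x - h y)^2 ∂ν := by
    intro y
    have hptw : ∀ x, |h x - |u y|^m * u x| ≤ |h x - h y| := by
      intro x
      have e : h x - |u y|^m * u x = u x * (|u x|^m - |u y|^m) := by rw [hh]; ring
      rw [e, abs_mul]
      calc |u x| * |(|u x|^m - |u y|^m)|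
          ≤ |(|u x|^(m+1) - |u y|^(m+1))| := by
            have := mul_abs_pow_le m (abs_nonneg (u x)) (abs_nonneg (u y))
            simpa using this
        _ = |(|h x| - |h y|)| := by rw [habsh x, habsh y]
        _ ≤ |h x - h y| := abs_abs_sub_abs_le_abs_sub _ _
    have step1 : |A1| ≤ ∫ x, |h x - h y| ∂ν := by
      have e : A1 = ∫ x, (h x - |u y|^m * u x) ∂ν := by
        rw [integral_sub ih (iu.const_mul _), integral_const_mul _ _, hU0]
        ring
      have habsint : |∫ x, (h x - |u y|^m * u x) ∂ν| ≤ ∫ x, |h x - |u y|^m * u x| ∂ν := by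
        have := norm_integral_le_integral_norm (μ := ν) (fun x => h x - |u y|^m * u x)
        simpa [Real.norm_eq_abs] using this
      calc |A1| = |∫ x, (h x - |u y|^m * u x) ∂ν| := by rw [← e]
        _ ≤ ∫ x, |h x - |u y|^m * u x| ∂ν := habsint
        _ ≤ ∫ x, |h x - h y| ∂ν := by
            apply integral_mono ((ih.sub (iu.const_mul _)).abs) ((ih.sub (integrable_const _)).abs)
            exact hptw
    have step2 : (∫ x, |h x - h y| ∂ν)^2 ≤ ∫ x, (h x - h y)^2 ∂ν := by
      have hcs := sq_integral_le ν ((ih.sub (integrable_const (h y))).abs)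
        (by
          have : Integrable (fun x => (h x - h y)^2) ν :=
            intQ (((hhcont.sub continuous_const).pow 2))
          apply this.congr
          exact Filter.Eventually.of_forall (fun x => (sq_abs (h x - h y)).symm))
      rw [measure_univ] at hcs
      simp only [ENNReal.toReal_one, one_mul] at hcs
      calc (∫ x, |h x - h y| ∂ν)^2 ≤ ∫ x, |h x - h y|^2 ∂ν := hcs
        _ = ∫ x, (h x - h y)^2 ∂ν := by
            apply integral_congr_ae
            exact Filter.Eventually.of_forall (fun x => sq_abs _)
    calc A1^2 = |A1|^2 := (sq_abs A1).symm
      _ ≤ (∫ x, |h x - h y| ∂ν)^2 :=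
          pow_le_pow_left₀ (abs_nonneg _) step1 2
      _ ≤ ∫ x, (h x - h y)^2 ∂ν := step2
  -- S value
  have hSval : ∫ y, (A2 - 2 * h y * A1 + (h y)^2) ∂ν = 2*A2 - 2*A1^2 := by
    have e : ∀ y, (A2 - 2 * h y * A1 + (h y)^2) = (A2 - (2*A1) * h y) + (h y)^2 := fun y => by ring
    have i1 : Integrable (fun y => A2 - (2*A1) * h y) ν := (integrable_const A2).sub (ih.const_mul _)
    rw [integral_congr_ae (Filter.Eventually.of_forall e),
        integral_add i1 ih2,
        integral_sub (integrable_const A2) (ih.const_mul _), integral_const_mul _ _, integral_const]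
    simp [measure_univ]
    ring
  have hSc : Integrable (fun y => A2 - 2 * h y * A1 + (h y)^2) ν := by
    have : Integrable (fun y => (A2 - (2*A1) * h y) + (h y)^2) ν :=
      ((integrable_const A2).sub (ih.const_mul _)).add ih2
    apply this.congr
    exact Filter.Eventually.of_forall (fun y => by ring)
  -- inner bound integrated
  set Mp := ∫ z, P z.2 ∂ν with hMpd
  set Mr := ∫ z, R z.1 ∂ν with hMrd
  have hin : ∀ y ∈ Qd, A2 - 2 * h y * A1 + (h y)^2 ≤ 2 * Mp + 2 * R y.1 := by
    intro y hy
    rw [← hcy y]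
    have hae : ∀ᵐ x ∂ν, (h x - h y)^2 ≤ 2 * P x.2 + 2 * R y.1 := by
      rw [hν]
      exact (ae_restrict_iff' hQdmeas).mpr
        (Filter.Eventually.of_forall (fun x hx => key x hx y hy))
    have hmono := integral_mono_ae (intQ ((hhcont.sub continuous_const).pow 2))
      ((hPsnd.const_mul 2).add (integrable_const (2 * R y.1))) hae
    calc ∫ x, (h x - h y)^2 ∂ν ≤ ∫ x, (2 * P x.2 + 2 * R y.1) ∂ν := hmono
      _ = 2 * Mp + 2 * R y.1 := by
          rw [integral_add (hPsnd.const_mul 2) (integrable_const _),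
              integral_const_mul _ _, integral_const]
          simp [measure_univ]; rfl
  have houter : 2*A2 - 2*A1^2 ≤ 2 * Mp + 2 * Mr := by
    have hae : ∀ᵐ y ∂ν, A2 - 2 * h y * A1 + (h y)^2 ≤ 2 * Mp + 2 * R y.1 := by
      rw [hν]
      exact (ae_restrict_iff' hQdmeas).mpr
        (Filter.Eventually.of_forall (fun y hy => hin y hy))
    have hmono := integral_mono_ae hSc
      ((integrable_const (2*Mp)).add (hRfst.const_mul 2)) hae
    rw [hSval] at hmono
    calc 2*A2 - 2*A1^2 ≤ ∫ y, (2 * Mp + 2 * R y.1) ∂ν := hmono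
      _ = 2 * Mp + 2 * Mr := by
          rw [integral_add (integrable_const (2*Mp)) (hRfst.const_mul 2),
              integral_const_mul _ _, integral_const]
          simp [measure_univ, hMrd]
          rw [integral_const_mul _ _]
  -- A1² ≤ 2A2 − 2A1²
  have hA1S : A1^2 ≤ 2*A2 - 2*A1^2 := by
    have hptw : ∀ y : ℝ×ℝ, A1^2 ≤ A2 - 2 * h y * A1 + (h y)^2 := by
      intro y
      rw [← hcy y]
      exact hA1sq y
    have hmono := integral_mono_ae (integrable_const (A1^2)) hSc
      (Filter.Eventually.of_forall hptw)
    rw [hSval, integral_const] at hmono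
    simpa [measure_univ] using hmono
  -- value of the gradient integral
  have hGGval : ∫ x, gradSq w x ∂ν = Mp + Mr := by
    have e : ∫ x, gradSq w x ∂ν = ∫ x, (F1 x + F2 x) ∂ν := by
      apply integral_congr_ae
      exact Filter.Eventually.of_forall (fun x => hgrad x)
    rw [e, integral_add (intQ (F := F1) (hg1cont.pow 2)) (intQ (F := F2) (hg2cont.pow 2)), hMp, hMr]
  have hGG0 : 0 ≤ ∫ x, gradSq w x ∂ν :=
    integral_nonneg (fun x => add_nonneg (sq_nonneg _) (sq_nonneg _))
  -- final numeric assembly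
  have hA23 : A2 ≤ 3 * ∫ x, gradSq w x ∂ν := by
    rw [hGGval]
    linarith [houter, hA1S]
  have hpow : ∀ x : ℝ×ℝ, (ρ x - M₀) ^ (2 * (m+1)) = (h x)^2 := by
    intro x
    have : (h x)^2 = (u x)^(2*(m+1)) := by
      calc (h x)^2 = |h x|^2 := (sq_abs _).symm
        _ = (|u x|^(m+1))^2 := by rw [habsh]
        _ = (|u x|^2)^(m+1) := by rw [← pow_mul, ← pow_mul, Nat.mul_comm]
        _ = ((u x)^2)^(m+1) := by rw [sq_abs]
        _ = (u x)^(2*(m+1)) := by rw [← pow_mul]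
    rw [this]
  have hLHS : ∫ x, (1 / (2 * ((m+1 : ℕ) : ℝ))) * (ρ x - M₀) ^ (2 * (m+1)) ∂ν
      = (1 / (2 * ((m+1 : ℕ) : ℝ))) * A2 := by
    rw [integral_const_mul _ _, hA2d]
    congr 1
    apply integral_congr_ae
    exact Filter.Eventually.of_forall (fun x => hpow x)
  rw [hLHS]
  set GG := ∫ x, gradSq w x ∂ν with hGGd
  set c : ℝ := ((m+1 : ℕ) : ℝ) with hcd
  have hc1 : (1:ℝ) ≤ c := by rw [hcd]; exact_mod_cast hn
  have hcpos : (0:ℝ) < c := lt_of_lt_of_le one_pos hc1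
  calc (1 / (2 * c)) * A2 ≤ (1 / (2 * c)) * (3 * GG) := by
        apply mul_le_mul_of_nonneg_left hA23 (by positivity)
    _ ≤ (4 / c) * GG := by
        rw [div_mul_eq_mul_div, div_mul_eq_mul_div,
            div_le_div_iff₀ (by positivity) (by positivity)]
        nlinarith [mul_nonneg hGG0 hcpos.le]
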